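/- Let α > 1 and let (T_t) be a C₀-semigroup on a Banach space X such that for some C > 0 and all t > 1, ∫₀ᵗ ‖T_s x‖² ds ≤ C t^{2α} ‖x‖² for all x ∈ X, and similarly for the adjoint semigroup on X*. Then ‖T_t‖ = O(t^α). -/

import Mathlib

open MeasureTheory Filter Set

/-!
For `t ≥ 2` and `s ∈ [t - 2, t - 1]` the semigroup law gives `T t x = T (t - s) (T s x)` with
`t - s ∈ [1, 2]`, where `‖T‖` is bounded by Banach–Steinhaus. Averaging `‖T t x‖² ≤ M² ‖T s x‖²`
over this unit interval bounds `‖T t x‖²` by `M² ∫₀ᵗ ‖T s x‖² ds ≤ M² C t^{2α} ‖x‖²`.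
-/

theorem exists_opNorm_le_of_continuousOn {𝕜 E F α : Type*} [NontriviallyNormedField 𝕜]
    [NormedAddCommGroup E] [NormedSpace 𝕜 E] [CompleteSpace E] [NormedAddCommGroup F]
    [NormedSpace 𝕜 F] [TopologicalSpace α] {T : α → E →L[𝕜] F} {K : Set α} (hK : IsCompact K)
    (hT : ∀ x, ContinuousOn (fun t => T t x) K) : ∃ M, ∀ t ∈ K, ‖T t‖ ≤ M := by
  obtain ⟨M, hM⟩ := banach_steinhaus (g := fun t : K => T t) fun x => by
    obtain ⟨B, hB⟩ := hK.exists_bound_of_continuousOn (hT x)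
    exact ⟨B, fun t => hB t t.2⟩
  exact ⟨M, fun t ht => hM ⟨t, ht⟩⟩

theorem intervalIntegral.mul_le_integral_of_le {f : ℝ → ℝ} {a b c : ℝ} (hab : a ≤ b)
    (hf : IntervalIntegrable f volume a b) (h : ∀ s ∈ Icc a b, c ≤ f s) :
    (b - a) * c ≤ ∫ s in a..b, f s := by
  simpa [intervalIntegral.integral_const] using
    intervalIntegral.integral_mono_on hab intervalIntegrable_const hf h

section Semigroup

variable {𝕜 E : Type*} [NontriviallyNormedField 𝕜] [NormedAddCommGroup E] [NormedSpace 𝕜 E]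
  {T : ℝ → E →L[𝕜] E}

theorem norm_apply_le_of_semigroup
    (hT : ∀ s t : ℝ, 0 ≤ s → 0 ≤ t → T (s + t) = (T s).comp (T t))
    {s t : ℝ} (hs : 0 ≤ s) (hst : s ≤ t) (x : E) : ‖T t x‖ ≤ ‖T (t - s)‖ * ‖T s x‖ := by
  have hsplit : T t = (T (t - s)).comp (T s) := by
    simpa using hT (t - s) s (sub_nonneg.2 hst) hs
  rw [hsplit]
  exact (T (t - s)).le_opNorm _

theorem mul_sq_norm_apply_le_integral
    (hT : ∀ s t : ℝ, 0 ≤ s → 0 ≤ t → T (s + t) = (T s).comp (T t))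
    (hcont : ∀ x, ContinuousOn (fun t => T t x) (Ici 0))
    {P Q M t : ℝ} (hP : 0 ≤ P) (hPQ : P ≤ Q) (hQt : Q ≤ t) (hM : ∀ r ∈ Icc P Q, ‖T r‖ ≤ M)
    (x : E) : (Q - P) * ‖T t x‖ ^ 2 ≤ M ^ 2 * ∫ s in 0..t, ‖T s x‖ ^ 2 := by
  have hsq_cont : ContinuousOn (fun s => ‖T s x‖ ^ 2) (Ici 0) := (hcont x).norm.pow 2
  have hint : IntervalIntegrable (fun s => ‖T s x‖ ^ 2) volume 0 t :=
    (hsq_cont.mono Icc_subset_Ici_self).intervalIntegrable_of_Icc (by linarith)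
  have hint' : IntervalIntegrable (fun s => ‖T s x‖ ^ 2) volume (t - Q) (t - P) :=
    (hsq_cont.mono fun s hs => le_trans (by linarith) hs.1).intervalIntegrable_of_Icc
      (by linarith)
  have hpointwise : ∀ s ∈ Icc (t - Q) (t - P), ‖T t x‖ ^ 2 ≤ M ^ 2 * ‖T s x‖ ^ 2 := by
    rintro s ⟨hQs, hsP⟩
    have hTts : ‖T (t - s)‖ ≤ M := hM _ ⟨by linarith, by linarith⟩
    have hle : ‖T t x‖ ≤ M * ‖T s x‖ :=
      (norm_apply_le_of_semigroup hT (by linarith) (by linarith) x).trans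
        (mul_le_mul_of_nonneg_right hTts (norm_nonneg _))
    simpa [mul_pow] using pow_le_pow_left₀ (norm_nonneg _) hle 2
  calc (Q - P) * ‖T t x‖ ^ 2
      = ((t - P) - (t - Q)) * ‖T t x‖ ^ 2 := by ring
    _ ≤ ∫ s in (t - Q)..(t - P), M ^ 2 * ‖T s x‖ ^ 2 :=
      intervalIntegral.mul_le_integral_of_le (by linarith) (hint'.const_mul _) hpointwise
    _ = M ^ 2 * ∫ s in (t - Q)..(t - P), ‖T s x‖ ^ 2 := intervalIntegral.integral_const_mul _ _
    _ ≤ M ^ 2 * ∫ s in 0..t, ‖T s x‖ ^ 2 := by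
      gcongr
      exact intervalIntegral.integral_mono_interval (by linarith) (by linarith) (by linarith)
        (Eventually.of_forall fun s => by positivity) hint

end Semigroup

theorem cesaro_bounds_imply_polynomial_growth_general
    {X : Type*} [NormedAddCommGroup X] [NormedSpace ℂ X] [CompleteSpace X]
    (α : ℝ)
    (T : ℝ → X →L[ℂ] X)
    (hTsemigroup : ∀ s t : ℝ, 0 ≤ s → 0 ≤ t → T (s + t) = (T s).comp (T t))
    (hTcont : ∀ x : X, ContinuousOn (fun t => T t x) (Set.Ici (0 : ℝ)))
    (C : ℝ)
    (hCesaro : ∀ t : ℝ, 1 < t → ∀ x : X,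
      ∫ s in (0 : ℝ)..t, ‖T s x‖ ^ 2 ≤ C * t ^ (2 * α) * ‖x‖ ^ 2) :
    (fun t : ℝ => ‖T t‖) =O[atTop] fun t : ℝ => t ^ α := by
  obtain ⟨M, hM⟩ := exists_opNorm_le_of_continuousOn isCompact_Icc fun x =>
    (hTcont x).mono (Icc_subset_Ici_self.trans (Ici_subset_Ici.2 zero_le_one))
  refine Asymptotics.IsBigO.of_bound √(M ^ 2 * C) ?_
  filter_upwards [eventually_ge_atTop 2] with t ht
  have htα : 0 ≤ t ^ α := Real.rpow_nonneg (by linarith) α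
  rw [norm_norm, Real.norm_of_nonneg htα]
  refine (T t).opNorm_le_bound (by positivity) fun x => ?_
  have hsq : ‖T t x‖ ^ 2 ≤ M ^ 2 * C * (t ^ α * ‖x‖) ^ 2 := by
    have h := (mul_sq_norm_apply_le_integral hTsemigroup hTcont zero_le_one one_le_two ht hM
      x).trans (mul_le_mul_of_nonneg_left (hCesaro t (by linarith) x) (sq_nonneg M))
    rw [mul_comm 2 α, Real.rpow_mul (by linarith), Real.rpow_two] at h
    linarith
  calc ‖T t x‖ = √(‖T t x‖ ^ 2) := (Real.sqrt_sq (norm_nonneg _)).symm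
    _ ≤ √(M ^ 2 * C * (t ^ α * ‖x‖) ^ 2) := Real.sqrt_le_sqrt hsq
    _ = √(M ^ 2 * C) * (t ^ α * ‖x‖) := by
      rw [Real.sqrt_mul' _ (sq_nonneg _), Real.sqrt_sq (by positivity)]
    _ = √(M ^ 2 * C) * t ^ α * ‖x‖ := by ring

/-- **Remark (1).** Let `α > 1` and let `(T_t)` be a `C₀`-semigroup on a complex Banach space
`X` such that for some `C > 0` and all `t > 1`, `∫₀ᵗ ‖T_s x‖² ds ≤ C t^{2α} ‖x‖²` for all
`x ∈ X`, and similarly `∫₀ᵗ ‖T_s* x*‖² ds ≤ C t^{2α} ‖x*‖²` for the adjoint semigroup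
`T_s* x* = x* ∘ T_s` acting on the dual `X*`. Then `‖T_t‖ = O(t^α)`. -/
theorem cesaro_bounds_imply_polynomial_growth
    {X : Type*} [NormedAddCommGroup X] [NormedSpace ℂ X] [CompleteSpace X]
    (α : ℝ) (hα : 1 < α)
    (T : ℝ → X →L[ℂ] X)
    (hT0 : T 0 = 1)
    (hTsemigroup : ∀ s t : ℝ, 0 ≤ s → 0 ≤ t → T (s + t) = (T s).comp (T t))
    (hTcont : ∀ x : X, ContinuousOn (fun t => T t x) (Set.Ici (0 : ℝ)))
    (C : ℝ) (hC : 0 < C)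
    (hCesaro : ∀ t : ℝ, 1 < t → ∀ x : X,
      ∫ s in (0 : ℝ)..t, ‖T s x‖ ^ 2 ≤ C * t ^ (2 * α) * ‖x‖ ^ 2)
    (hCesaroDual : ∀ t : ℝ, 1 < t → ∀ x' : StrongDual ℂ X,
      ∫ s in (0 : ℝ)..t, ‖x'.comp (T s)‖ ^ 2 ≤ C * t ^ (2 * α) * ‖x'‖ ^ 2) :
    (fun t : ℝ => ‖T t‖) =O[atTop] fun t : ℝ => t ^ α :=
  cesaro_bounds_imply_polynomial_growth_general α T hTsemigroup hTcont C hCesaro
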